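/- arXiv:0903.5000 — 2 statements merged into one kernel-verified Lean document; each statement's English description precedes it below -/
import Mathlib

section
/- Let p be an odd prime. In F_p[y_1,...,y_n], the Dickson invariant Q_{n,0} equals L_n^{p-1}, where L_n = det(y_i^{p^{j-1}}). -/
open MvPolynomial Finset

/-- `br p e = det (y_i ^ (p ^ e_j))` in `F_p[y_1,…,y_n]`. -/
noncomputable def br (p : ℕ) {n : ℕ} (e : Fin n → ℕ) : MvPolynomial (Fin n) (ZMod p) :=
  Matrix.det (Matrix.of fun i j : Fin n => (X i : MvPolynomial (Fin n) (ZMod p)) ^ p ^ e j)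

/-- `L_n = [0,1,…,n-1]`. -/
noncomputable def Lpoly (p n : ℕ) : MvPolynomial (Fin n) (ZMod p) :=
  br p (fun j : Fin n => (j : ℕ))

/-- `L_{n,s} = [0,…,ŝ,…,n]`. -/
noncomputable def Ls (p n s : ℕ) : MvPolynomial (Fin n) (ZMod p) :=
  br p (fun j : Fin n => if (j : ℕ) < s then (j : ℕ) else (j : ℕ) + 1)

/-- The coefficient of the "diagonal" monomial `∏ y_i ^ (p^i)` in `L_n` is `1`. -/
lemma coeff_diag_Lpoly (p n : ℕ) (hp : 1 < p) :
    MvPolynomial.coeff (∑ i : Fin n, Finsupp.single i (p ^ (i:ℕ))) (Lpoly p n) = 1 := by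
  classical
  rw [Lpoly, br, Matrix.det_apply]
  have hmon : ∀ σ : Equiv.Perm (Fin n),
      (∏ i : Fin n, (Matrix.of fun i j : Fin n =>
        (X i : MvPolynomial (Fin n) (ZMod p)) ^ p ^ (j:ℕ)) (σ i) i)
      = monomial (∑ i : Fin n, Finsupp.single (σ i) (p ^ (i:ℕ))) (1 : ZMod p) := by
    intro σ
    simp only [Matrix.of_apply, X_pow_eq_monomial]
    rw [monomial_sum_one]
  have key : ∀ σ : Equiv.Perm (Fin n),
      (∑ i : Fin n, Finsupp.single (σ i) (p ^ (i:ℕ)))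
        = (∑ i : Fin n, Finsupp.single i (p ^ (i:ℕ))) → σ = 1 := by
    intro σ h
    ext j
    have := DFunLike.congr_fun h (σ j)
    simp [Finsupp.finset_sum_apply, Finsupp.single_apply] at this
    simpa using Nat.pow_right_injective hp this.symm
  rw [MvPolynomial.coeff_sum]
  rw [Finset.sum_eq_single (1 : Equiv.Perm (Fin n))]
  · rw [hmon]; simp [coeff_monomial]
  · intro σ _ hσ
    rw [hmon]
    simp only [MvPolynomial.coeff_smul, coeff_monomial]
    rw [if_neg (fun h => hσ (key σ h))]
    simp
  · simp

lemma Lpoly_ne_zero (p n : ℕ) (hp : p.Prime) : Lpoly p n ≠ 0 := by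
  haveI := Fact.mk hp
  intro h
  have := coeff_diag_Lpoly p n hp.one_lt
  rw [h] at this
  simp at this

/-- By the Frobenius, `L_{n,0} = L_n ^ p`. -/
lemma Ls_zero_eq (p n : ℕ) (hp : p.Prime) : Ls p n 0 = (Lpoly p n) ^ p := by
  haveI := Fact.mk hp
  have h : (Lpoly p n) ^ p = frobenius (MvPolynomial (Fin n) (ZMod p)) p (Lpoly p n) := rfl
  rw [h, Lpoly, br, RingHom.map_det, Ls, br]
  congr 1
  ext i j
  simp [Matrix.map_apply, frobenius_def, ← pow_mul, ← pow_succ]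

/-- The Dickson invariant `Q_{n,0} = L_{n,0}/L_n` equals `L_n^{p-1}`. -/
theorem stmt4 (p n : ℕ) (hp : p.Prime) (hodd : Odd p)
    (Q0 : MvPolynomial (Fin n) (ZMod p))
    (hQ0 : Lpoly p n * Q0 = Ls p n 0) :
    Q0 = (Lpoly p n) ^ (p - 1) := by
  haveI := Fact.mk hp
  have hL : Lpoly p n ≠ 0 := Lpoly_ne_zero p n hp
  apply mul_left_cancel₀ hL
  rw [hQ0, Ls_zero_eq p n hp, ← pow_succ']
  congr 1
  have := hp.two_le
  omega
end

section
/- Let p be an odd prime, 0 ≤ u < v. Let I(u,v) be the set of nonnegative integers a whose base-p digits α_i(a) satisfy α_i(a) + α_{i+1}(a) ≤ 1 for all i, and α_i(a) = 0 for i < u or i ≥ v−2. Then in F_p[y_1,y_2]: [u,v] = Σ_{a ∈ I(u,v)} (−1)^a L_2^{p^u + p(p−1)a} · Q_{2,1}^{(p^{v-1}−p^u)/(p−1) − (p+1)a}. -/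
/-!
The Plücker relation `[u,t][t+1,t+2] - [u,t+1][t,t+2] + [u,t+2][t,t+1] = 0` between `2 × 2`
minors, the Frobenius identity `[a,b]^(p^k) = [a+k,b+k]` (so `[t,t+1] = L^(p^t)` and
`[t,t+2] = (L Q)^(p^t)`) and cancellation of `L^(p^t)` in the domain `F_p[y₁,y₂]` give the
recurrence `[u,t+2] = Q^(p^t) [u,t+1] - L^((p-1) p^t) [u,t]`.
The sum on the right obeys the same recurrence with the same values at `v = u+1, u+2`:
according to the digit `α_k`, `I(u,k+3)` splits as `I(u,k+2) ⊔ (p^k + I(u,k+1))`, the first part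
picking up the factor `Q^(p^(k+1))` and the second `-L^((p-1) p^(k+1))`, the sign because `p^k`
is odd. No exponent of `Q` is truncated, since `(p+1) a ≤ (p^(v-1) - p^u)/(p-1)` on `I(u,v)`.
-/

open MvPolynomial Finset

/-- `α_i(a)`: the `i`-th digit in the base-`p` expansion of `a`. -/
def alphaDigit (p a i : ℕ) : ℕ := a / p ^ i % p

/-- `I(u,v)`: nonnegative integers `a` with `α_i(a)+α_{i+1}(a) ≤ 1` for all `i`, and
`α_i(a) = 0` for `i < u` or `i ≥ v-2`. -/
def Iset (p u v : ℕ) : Set ℕ :=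
  {a | (∀ i, alphaDigit p a i + alphaDigit p a (i + 1) ≤ 1) ∧
    ∀ i, (i < u ∨ v - 2 ≤ i) → alphaDigit p a i = 0}

open Classical in
/-- `I(u,v)` as a finset (every element of `I(u,v)` is `< p^v`). -/
noncomputable def Ifin (p u v : ℕ) : Finset ℕ :=
  (Finset.range (p ^ v)).filter (fun a => a ∈ Iset p u v)

section Digits

variable {p : ℕ}

lemma alphaDigit_eq_zero_of_lt_pow (hp : 0 < p) {a k i : ℕ} (ha : a < p ^ k) (hi : k ≤ i) :
    alphaDigit p a i = 0 := by
  simp [alphaDigit, Nat.div_eq_of_lt (ha.trans_le (Nat.pow_le_pow_right hp hi))]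

lemma lt_pow_of_alphaDigit_eq_zero (hp : 1 < p) {a k : ℕ}
    (h : ∀ i, k ≤ i → alphaDigit p a i = 0) : a < p ^ k := by
  by_contra! hk
  have ha : a ≠ 0 := ((pow_pos (by omega) k).trans_le hk).ne'
  set m := Nat.log p a
  have hlow : p ^ m ≤ a := Nat.pow_log_le_self p ha
  have hhigh : a / p ^ m < p :=
    Nat.div_lt_of_lt_mul (by rw [← pow_succ]; exact Nat.lt_pow_succ_log_self hp a)
  have hdigit := h m (Nat.le_log_of_pow_le hp hk)
  rw [alphaDigit, Nat.mod_eq_of_lt hhigh] at hdigit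
  exact (Nat.div_pos hlow (by positivity)).ne' hdigit

lemma alphaDigit_pow_add (hp : 1 < p) {k c : ℕ} (hc : c < p ^ k) (i : ℕ) :
    alphaDigit p (p ^ k + c) i = if i < k then alphaDigit p c i else if i = k then 1 else 0 := by
  unfold alphaDigit
  rcases lt_trichotomy i k with hik | rfl | hik
  · obtain ⟨j, rfl⟩ := Nat.exists_eq_add_of_lt hik
    rw [if_pos hik, show p ^ (i + j + 1) = p * p ^ j * p ^ i by ring, add_comm,
      Nat.add_mul_div_right _ _ (by positivity), Nat.add_mul_mod_self_left]
  · rw [if_neg (lt_irrefl i), if_pos rfl, add_comm, Nat.add_div_right _ (by positivity),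
      Nat.div_eq_of_lt hc, zero_add, Nat.mod_eq_of_lt hp]
  · have : p ^ k + c < p ^ i := calc
      p ^ k + c < p ^ k * p := by rw [Nat.mul_comm]; nlinarith
      _ = p ^ (k + 1) := (pow_succ p k).symm
      _ ≤ p ^ i := Nat.pow_le_pow_right (by omega) hik
    rw [Nat.div_eq_of_lt this, if_neg (by omega), if_neg (by omega), Nat.zero_mod]

end Digits

lemma induction_add_three {u : ℕ} {P : ℕ → Prop} (base : ∀ v ≤ u + 2, P v)
    (step : ∀ k, u ≤ k → P (k + 1) → P (k + 2) → P (k + 3)) (v : ℕ) : P v := by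
  induction v using Nat.strong_induction_on with
  | _ v ih =>
    by_cases hv : v ≤ u + 2
    · exact base v hv
    · obtain ⟨k, rfl⟩ : ∃ k, v = k + 3 := ⟨v - 3, by omega⟩
      exact step k (by omega) (ih _ (by omega)) (ih _ (by omega))

lemma geom_div_succ {p u n : ℕ} (hp : 1 < p) (h : u ≤ n) :
    (p ^ (n + 1) - p ^ u) / (p - 1) = p ^ n + (p ^ n - p ^ u) / (p - 1) := by
  have hu : p ^ u ≤ p ^ n := Nat.pow_le_pow_right (by omega) h
  have hn : p ^ n ≤ p ^ n * p := Nat.le_mul_of_pos_right _ (by omega)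
  have : p ^ (n + 1) - p ^ u = (p ^ n - p ^ u) + p ^ n * (p - 1) := by
    rw [pow_succ, Nat.mul_sub_one]; omega
  rw [this, Nat.add_mul_div_right _ _ (by omega), add_comm]

section Admissible

variable {p u : ℕ}

lemma Iset_eq_zero (hp : 1 < p) {v a : ℕ} (hv : v ≤ u + 2) (ha : a ∈ Iset p u v) : a = 0 := by
  simpa using lt_pow_of_alphaDigit_eq_zero hp (k := 0) fun i _ => ha.2 i (by omega)

lemma mem_Ifin (hp : 1 < p) {v a : ℕ} : a ∈ Ifin p u v ↔ a ∈ Iset p u v := by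
  classical
  simp only [Ifin, Finset.mem_filter, Finset.mem_range, and_iff_right_iff_imp]
  exact fun h => (lt_pow_of_alphaDigit_eq_zero hp fun i hi => h.2 i (Or.inr hi)).trans_le
    (Nat.pow_le_pow_right (by omega) (by omega))

lemma Ifin_of_le (hp : 1 < p) {v : ℕ} (hv : v ≤ u + 2) : Ifin p u v = {0} := by
  ext a
  rw [mem_Ifin hp, Finset.mem_singleton]
  refine ⟨Iset_eq_zero hp hv, ?_⟩
  rintro rfl
  exact ⟨fun i => by simp [alphaDigit], fun i _ => by simp [alphaDigit]⟩

lemma pow_add_mem_Iset_iff (hp : 1 < p) {k c : ℕ} (hk : u ≤ k) (hc : c < p ^ k) :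
    p ^ k + c ∈ Iset p u (k + 3) ↔ c ∈ Iset p u (k + 1) := by
  have hd := alphaDigit_pow_add hp hc
  have hc0 : ∀ i, k ≤ i → alphaDigit p c i = 0 := fun i =>
    alphaDigit_eq_zero_of_lt_pow (by omega) hc
  constructor <;> rintro ⟨hadj, hzero⟩ <;> refine ⟨fun i => ?_, fun i hi => ?_⟩ <;>
  · have := hadj i; have := hzero i; have := hd i; have := hd (i + 1)
    have := hc0 i; have := hc0 (i + 1)
    split_ifs at * <;> omega

lemma mem_Iset_add_three (hp : 1 < p) {k a : ℕ} (hk : u ≤ k) :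
    a ∈ Iset p u (k + 3) ↔
      a ∈ Iset p u (k + 2) ∨ ∃ c ∈ Iset p u (k + 1), p ^ k + c = a := by
  refine ⟨fun ha => ?_, ?_⟩
  · by_cases htop : alphaDigit p a k = 0
    · refine Or.inl ⟨ha.1, fun i hi => ?_⟩
      rcases Nat.lt_or_ge i (k + 1) with h | h
      · rcases hi with hi | hi
        · exact ha.2 i (Or.inl hi)
        · rwa [show i = k by omega]
      · exact ha.2 i (Or.inr (by omega))
    · have hlt : a < p ^ k * p := pow_succ p k ▸
        lt_pow_of_alphaDigit_eq_zero hp fun i hi => ha.2 i (Or.inr (by omega))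
      have hone : a / p ^ k = 1 := by
        have := ha.1 k
        rw [alphaDigit, Nat.mod_eq_of_lt (Nat.div_lt_of_lt_mul hlt)] at htop this
        generalize a / p ^ k = q at htop this
        omega
      have hsplit : p ^ k + a % p ^ k = a := by
        have := Nat.div_add_mod a (p ^ k); rwa [hone, mul_one] at this
      refine Or.inr ⟨a % p ^ k, ?_, hsplit⟩
      exact (pow_add_mem_Iset_iff hp hk (Nat.mod_lt _ (by positivity))).1 (by rwa [hsplit])
  · rintro (ha | ⟨c, hc, rfl⟩)
    · exact ⟨ha.1, fun i hi => ha.2 i (by omega)⟩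
    · have hclt : c < p ^ k :=
        lt_pow_of_alphaDigit_eq_zero hp fun i hi => hc.2 i (Or.inr (by omega))
      exact (pow_add_mem_Iset_iff hp hk hclt).2 hc

lemma mul_le_of_mem_Iset (hp : 1 < p) {v a : ℕ} (ha : a ∈ Iset p u v) :
    (p + 1) * a ≤ (p ^ (v - 1) - p ^ u) / (p - 1) := by
  induction v using induction_add_three (u := u) generalizing a with
  | base v hv => simp [Iset_eq_zero hp hv ha]
  | step k hk ih₁ ih₂ =>
    have hsucc : (p ^ (k + 2) - p ^ u) / (p - 1) =
        p ^ (k + 1) + p ^ k + (p ^ k - p ^ u) / (p - 1) := by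
      rw [geom_div_succ hp (by omega), geom_div_succ hp hk, add_assoc]
    rcases (mem_Iset_add_three hp hk).1 ha with ha | ⟨c, hc, rfl⟩
    · have := ih₂ ha
      rw [show k + 2 - 1 = k + 1 from rfl, geom_div_succ hp hk] at this
      rw [show k + 3 - 1 = k + 2 from rfl, hsucc]
      omega
    · have := ih₁ hc
      rw [show k + 3 - 1 = k + 2 from rfl, hsucc, mul_add,
        show (p + 1) * p ^ k = p ^ (k + 1) + p ^ k by ring]
      exact Nat.add_le_add_left this _

lemma sum_Ifin_add_three {M : Type*} [AddCommMonoid M] (hp : 1 < p) {k : ℕ} (hk : u ≤ k)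
    (f : ℕ → M) :
    ∑ a ∈ Ifin p u (k + 3), f a =
      ∑ a ∈ Ifin p u (k + 2), f a + ∑ c ∈ Ifin p u (k + 1), f (p ^ k + c) := by
  have hunion : Ifin p u (k + 3) = Ifin p u (k + 2) ∪ (Ifin p u (k + 1)).image (p ^ k + ·) := by
    ext a
    simp only [Finset.mem_union, Finset.mem_image, mem_Ifin hp, mem_Iset_add_three hp hk]
  have hdisj : Disjoint (Ifin p u (k + 2)) ((Ifin p u (k + 1)).image (p ^ k + ·)) := by
    refine Finset.disjoint_left.2 fun a ha hb => ?_
    obtain ⟨c, hc, rfl⟩ := Finset.mem_image.1 hb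
    have hclt : c < p ^ k :=
      lt_pow_of_alphaDigit_eq_zero hp fun i hi => ((mem_Ifin hp).1 hc).2 i (Or.inr (by omega))
    have htop := ((mem_Ifin hp).1 ha).2 k (Or.inr (by omega))
    simp [alphaDigit_pow_add hp hclt] at htop
  rw [hunion, Finset.sum_union hdisj, Finset.sum_image fun _ _ _ _ h => Nat.add_left_cancel h]

end Admissible

section Expansion

variable {R : Type*} [CommRing R]

noncomputable def dicksonExpansion (p u v : ℕ) (L Q : R) : R :=
  ∑ a ∈ Ifin p u v, (-1 : R) ^ a * L ^ (p ^ u + p * (p - 1) * a) *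
    Q ^ ((p ^ (v - 1) - p ^ u) / (p - 1) - (p + 1) * a)

variable {p u : ℕ} (L Q : R)

lemma dicksonExpansion_self_add_one (hp : 1 < p) :
    dicksonExpansion p u (u + 1) L Q = L ^ p ^ u := by
  simp [dicksonExpansion, Ifin_of_le hp (u := u) (v := u + 1) (by omega)]

lemma dicksonExpansion_self_add_two (hp : 1 < p) :
    dicksonExpansion p u (u + 2) L Q = (L * Q) ^ p ^ u := by
  simp [dicksonExpansion, Ifin_of_le hp (u := u) (v := u + 2) le_rfl, geom_div_succ hp le_rfl,
    mul_pow]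

lemma dicksonExpansion_add_three (hp : 1 < p) (hodd : Odd p) {k : ℕ} (hk : u ≤ k) :
    dicksonExpansion p u (k + 3) L Q =
      Q ^ p ^ (k + 1) * dicksonExpansion p u (k + 2) L Q -
        L ^ ((p - 1) * p ^ (k + 1)) * dicksonExpansion p u (k + 1) L Q := by
  simp only [dicksonExpansion, Finset.mul_sum, sub_eq_add_neg, ← Finset.sum_neg_distrib,
    sum_Ifin_add_three hp hk]
  congr 1 <;> refine Finset.sum_congr rfl fun a ha => ?_
  · have hb := mul_le_of_mem_Iset hp ((mem_Ifin hp).1 ha)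
    rw [show k + 2 - 1 = k + 1 from rfl] at hb ⊢
    have hexp : (p ^ (k + 2) - p ^ u) / (p - 1) - (p + 1) * a =
        p ^ (k + 1) + ((p ^ (k + 1) - p ^ u) / (p - 1) - (p + 1) * a) := by
      rw [geom_div_succ hp (by omega)]
      omega
    rw [show k + 3 - 1 = k + 2 from rfl, hexp, pow_add]
    ring
  · have hb := mul_le_of_mem_Iset hp ((mem_Ifin hp).1 ha)
    rw [show k + 1 - 1 = k from rfl] at hb ⊢
    have hexp : (p ^ (k + 2) - p ^ u) / (p - 1) - (p + 1) * (p ^ k + a) =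
        (p ^ k - p ^ u) / (p - 1) - (p + 1) * a := by
      rw [geom_div_succ hp (by omega), geom_div_succ hp hk, mul_add,
        show (p + 1) * p ^ k = p ^ (k + 1) + p ^ k by ring]
      omega
    rw [show k + 3 - 1 = k + 2 from rfl, hexp, pow_add (-1 : R), hodd.pow.neg_one_pow,
      show p ^ u + p * (p - 1) * (p ^ k + a) =
        p ^ u + p * (p - 1) * a + (p - 1) * p ^ (k + 1) by ring,
      pow_add L]
    ring

end Expansion

section Brackets

variable {p : ℕ}

lemma br_two (a b : ℕ) :
    br p ![a, b] = X 0 ^ p ^ a * X 1 ^ p ^ b - X 1 ^ p ^ a * X 0 ^ p ^ b := by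
  rw [br, Matrix.det_fin_two]
  simp only [Matrix.of_apply, Matrix.cons_val_zero, Matrix.cons_val_one]
  ring

lemma br_pluecker (a b c e : ℕ) :
    br p ![a, b] * br p ![c, e] - br p ![a, c] * br p ![b, e] + br p ![a, e] * br p ![b, c] =
      0 := by
  simp only [br_two]
  ring

lemma Lpoly_two : Lpoly p 2 = br p ![0, 1] := by
  rw [Lpoly]; congr 1; funext j; fin_cases j <;> rfl

lemma Ls_two_one : Ls p 2 1 = br p ![0, 2] := by
  rw [Ls]; congr 1; funext j; fin_cases j <;> rfl

variable [Fact p.Prime]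

lemma br_pow_pow (a b k : ℕ) : br p ![a, b] ^ p ^ k = br p ![a + k, b + k] := by
  simp only [br_two, sub_pow_char_pow, mul_pow, ← pow_mul, ← pow_add]

lemma Lpoly_two_pow (k : ℕ) : Lpoly p 2 ^ p ^ k = br p ![k, k + 1] := by
  rw [Lpoly_two, br_pow_pow, zero_add, add_comm]

lemma Ls_two_one_pow (k : ℕ) : Ls p 2 1 ^ p ^ k = br p ![k, k + 2] := by
  rw [Ls_two_one, br_pow_pow, zero_add, add_comm]

lemma Lpoly_two_ne_zero : Lpoly p 2 ≠ 0 := by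
  intro h
  -- `y₁ ↦ T, y₂ ↦ 1` sends `L` to `T - T ^ p`, whose coefficient of `T` is `1`.
  have := congrArg
    (fun f => (aeval (R := ZMod p) ![(Polynomial.X : Polynomial (ZMod p)), 1] f).coeff 1) h
  simp [Lpoly_two, br_two, Polynomial.coeff_X_pow, (Fact.out : p.Prime).one_lt.ne] at this

lemma br_add_two {Q : MvPolynomial (Fin 2) (ZMod p)} (hQ : Lpoly p 2 * Q = Ls p 2 1) (u t : ℕ) :
    br p ![u, t + 2] =
      Q ^ p ^ t * br p ![u, t + 1] - Lpoly p 2 ^ ((p - 1) * p ^ t) * br p ![u, t] := by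
  have hp := (Fact.out : p.Prime).one_lt
  have hLQ : br p ![t, t + 2] = Lpoly p 2 ^ p ^ t * Q ^ p ^ t := by
    rw [← mul_pow, hQ, Ls_two_one_pow]
  have hLL : br p ![t + 1, t + 2] = Lpoly p 2 ^ p ^ t * Lpoly p 2 ^ ((p - 1) * p ^ t) := by
    rw [← pow_add, ← one_add_mul, Nat.add_sub_cancel' hp.le, ← pow_succ', Lpoly_two_pow]
  apply mul_left_cancel₀ (pow_ne_zero (p ^ t) (Lpoly_two_ne_zero (p := p)))
  have hP := br_pluecker (p := p) u t (t + 1) (t + 2)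
  rw [hLQ, hLL, ← Lpoly_two_pow] at hP
  linear_combination hP

end Brackets

/-- For `0 ≤ u < v`, in `F_p[y₁,y₂]`:
`[u,v] = Σ_{a ∈ I(u,v)} (−1)^a · L₂^{p^u + p(p−1)a} · Q_{2,1}^{(p^{v-1}−p^u)/(p−1) − (p+1)a}`. -/
theorem stmt15 (p u v : ℕ) (hp : p.Prime) (hodd : Odd p) (huv : u < v)
    (Q21 : MvPolynomial (Fin 2) (ZMod p))
    (hQ21 : Lpoly p 2 * Q21 = Ls p 2 1) :
    br p ![u, v] =
      ∑ a ∈ Ifin p u v,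
        (-1 : MvPolynomial (Fin 2) (ZMod p)) ^ a *
          (Lpoly p 2) ^ (p ^ u + p * (p - 1) * a) *
          Q21 ^ ((p ^ (v - 1) - p ^ u) / (p - 1) - (p + 1) * a) := by
  have : Fact p.Prime := ⟨hp⟩
  change br p ![u, v] = dicksonExpansion p u v (Lpoly p 2) Q21
  induction v using induction_add_three (u := u) with
  | base v hv =>
    obtain rfl | rfl : v = u + 1 ∨ v = u + 2 := by omega
    · rw [dicksonExpansion_self_add_one _ _ hp.one_lt, Lpoly_two_pow]
    · rw [dicksonExpansion_self_add_two _ _ hp.one_lt, hQ21, Ls_two_one_pow]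
  | step k hk ih₁ ih₂ =>
    rw [br_add_two hQ21 u (k + 1), ih₁ (by omega), ih₂ (by omega),
      dicksonExpansion_add_three _ _ hp.one_lt hodd hk]
end
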